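/- For even n ≥ 2, there is no function f : (Fin n → Bool) → Bool that is both fully sensitive (flipping any single coordinate flips the output) and valid (for every x there exists i with f x = x i). -/

import Mathlib

/-!
Flipping one coordinate flips a fully sensitive function, so walking from the all-`false` input
to the all-`true` input one coordinate at a time flips the output `n` times; for even `n` the two
outputs agree. Validity forces the output on a constant input to be that constant, so they differ.
-/

open Finset Function

def FullySensitive {ι : Type*} [DecidableEq ι] (f : (ι → Bool) → Bool) : Prop :=
  ∀ (x : ι → Bool) (i : ι), f (update x i true) ≠ f (update x i false)

namespace FullySensitive

variable {ι : Type*} [DecidableEq ι] {f : (ι → Bool) → Bool}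

theorem apply_update_not (hf : FullySensitive f) (x : ι → Bool) (i : ι) :
    f (update x i (!x i)) = !f x := by
  have hx : f x = f (update x i (x i)) := by rw [update_eq_self]
  rw [hx, Bool.eq_not_iff]
  cases x i
  · exact hf x i
  · exact (hf x i).symm

theorem apply_mem_finset (hf : FullySensitive f) (s : Finset ι) :
    f (fun i => decide (i ∈ s)) = (f (fun _ => false) ^^ decide (Odd #s)) := by
  induction s using Finset.induction_on with
  | empty => simp
  | insert a s ha ih =>
    have hupdate :
        (fun i => decide (i ∈ insert a s)) = update (fun i => decide (i ∈ s)) a true := by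
      ext i
      by_cases hi : i = a <;> simp [hi, ha]
    have hflip := hf.apply_update_not (fun i => decide (i ∈ s)) a
    simp only [ha, decide_false, Bool.not_false] at hflip
    rw [hupdate, hflip, ih, card_insert_of_notMem ha]
    simp only [Nat.odd_add_one, decide_not, Bool.xor_not]

theorem apply_true_eq_apply_false [Fintype ι] (hf : FullySensitive f)
    (heven : Even (Fintype.card ι)) : f (fun _ => true) = f (fun _ => false) := by
  simpa [Nat.not_odd_iff_even.mpr heven] using hf.apply_mem_finset univ

end FullySensitive

theorem no_fully_sensitive_valid_even_general (n : ℕ) (heven : Even n) :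
    ¬ ∃ f : (Fin n → Bool) → Bool,
      (∀ (x : Fin n → Bool) (i : Fin n),
        f (Function.update x i true) ≠ f (Function.update x i false)) ∧
      (∀ x : Fin n → Bool, ∃ i : Fin n, f x = x i) := by
  rintro ⟨f, hsens, hvalid⟩
  have hconst (b : Bool) : f (fun _ => b) = b := (hvalid _).elim fun _ h => h
  have hsame := FullySensitive.apply_true_eq_apply_false hsens (by simpa using heven)
  simp [hconst] at hsame

theorem no_fully_sensitive_valid_even (n : ℕ) (hn : 2 ≤ n) (heven : Even n) :
    ¬ ∃ f : (Fin n → Bool) → Bool,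
      (∀ (x : Fin n → Bool) (i : Fin n),
        f (Function.update x i true) ≠ f (Function.update x i false)) ∧
      (∀ x : Fin n → Bool, ∃ i : Fin n, f x = x i) :=
  no_fully_sensitive_valid_even_general n heven
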